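/- Let n, ℓ ≥ 1, T > 0, let U ⊆ ℝˡ be nonempty, let b : [0,T]×ℝⁿ×U → ℝⁿ and σ : [0,T]×ℝⁿ×U → ℝⁿ be given, and set a(t,x,u) := (1/2)σ(t,x,u)σ(t,x,u)ᵀ ∈ ℝ^{n×n}. Let F̂ : ℝⁿ×ℝⁿ → ℝ and Ĝ : ℝⁿ×ℝⁿ → ℝ be given with Ĝ twice continuously differentiable. For u ∈ U and a C^{1,2} function k : [0,T]×ℝⁿ → ℝ set (A^u k)(t,x) := k_t(t,x) + k_x(t,x)·b(t,x,u) + tr[k_{xx}(t,x)·a(t,x,u)] (applied componentwise to vector-valued k). Suppose Θ : [0,T]×ℝⁿ → ℝⁿ and Θ⁰ : [0,T]×ℝⁿ×ℝⁿ×ℝⁿ → ℝ (arguments (t, x̃, x, y)) are sufficiently smooth, Ψ̄ : [0,T]×ℝⁿ → U is a map, and: (i) for each fixed (t, x̃, x), the function y ↦ Θ⁰(t,x̃,x,y) − Ĝ(x̃,y) is constant; (ii) Θ_s(s,x) + Θ_x(s,x)b(s,x,Ψ̄(s,x)) + tr[Θ_{xx}(s,x)a(s,x,Ψ̄(s,x))]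 = 0 with Θ(T,x) = x, and Θ⁰_s(s,x̃,x,y) + Θ⁰_x(s,x̃,x,y)b(s,x,Ψ̄(s,x)) + tr[Θ⁰_{xx}(s,x̃,x,y)a(s,x,Ψ̄(s,x))] = 0 (derivatives in the third argument x) with Θ⁰(T,x̃,x,y) = F̂(x̃,x) + Ĝ(x̃,y); (iii) for every (t,x), the choice u = Ψ̄(t,x) minimizes over u ∈ U the quantity Θ⁰_x(t,x,x,Θ(t,x))·b(t,x,u) + tr[Θ⁰_{xx}(t,x,x,Θ(t,x))·a(t,x,u)] + Θ⁰_y(t,x,x,Θ(t,x))·( Θ_x(t,x)b(t,x,u) + tr[Θ_{xx}(t,x)a(t,x,u)] ). Define V̂(t,x) := Θ⁰(t,x,x,Θ(t,x)), ĝ(t,x) := Θ(t,x), û(t,x) := Ψ̄(t,x), f̂(t,x̃,x) := Θ⁰(t,x̃,x,y) − Ĝ(x̃,y) (independent of y by (i)), f̂^{x̃}(t,x) := f̂(t,x̃,x), (Ĝ ⋄ ĝ)(t,x) := Ĝ(x, ĝ(t,x)), and (H^u ĝ)(t,x) := Ĝ_y(x, ĝ(t,x))·(A^u ĝ)(t,x).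 Then (V̂, f̂, ĝ, û) solves the extended HJB system: for all (t,x) ∈ [0,T]×ℝⁿ, inf_{u∈U} [ (A^u V̂)(t,x) − (A^u f̂(·,·,·))(t,x,x) + (A^u f̂^x)(t,x) − A^u(Ĝ ⋄ ĝ)(t,x) + (H^u ĝ)(t,x) ] = 0, and the infimum is attained at u = û(t,x); (A^{û(t,x)} f̂^{z})(t,x) = 0 for every z ∈ ℝⁿ; (A^{û(t,x)} ĝ)(t,x) = 0; and V̂(T,x) = F̂(x,x) + Ĝ(x,x), f̂^{x̃}(T,x) = F̂(x̃,x), ĝ(T,x) = x. (Here (A^u f̂(·,·,·))(t,x,x) means A^u applied to the map (t,x) ↦ f̂(t,x,x) in which both spatial slots vary, while (A^u f̂^{x̃})(t,x) freezes the first spatial slot.) -/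

import Mathlib

noncomputable section

/-- Embed a coordinate function as an element of `EuclideanSpace ℝ (Fin n)`. -/
def toE (n : ℕ) (v : Fin n → ℝ) : EuclideanSpace ℝ (Fin n) :=
  (WithLp.equiv 2 (Fin n → ℝ)).symm v

/-- Partial derivative in time of `k : ℝ × ℝⁿ → ℝ`. -/
def pdT (n : ℕ) (k : ℝ → EuclideanSpace ℝ (Fin n) → ℝ)
    (t : ℝ) (x : EuclideanSpace ℝ (Fin n)) : ℝ :=
  deriv (fun τ => k τ x) t

/-- `i`-th spatial partial derivative of `k : ℝⁿ → ℝ`. -/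
def pdX (n : ℕ) (k : EuclideanSpace ℝ (Fin n) → ℝ)
    (x : EuclideanSpace ℝ (Fin n)) (i : Fin n) : ℝ :=
  fderiv ℝ k x (EuclideanSpace.single i (1 : ℝ))

/-- `(i,j)` entry of the spatial Hessian of `k : ℝⁿ → ℝ`. -/
def pdXX (n : ℕ) (k : EuclideanSpace ℝ (Fin n) → ℝ)
    (x : EuclideanSpace ℝ (Fin n)) (i j : Fin n) : ℝ :=
  fderiv ℝ (fun y => pdX n k y i) x (EuclideanSpace.single j (1 : ℝ))

/-- Spatial part `k_x · b + tr[k_xx a]` of the controlled generator. -/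
def spatialGen (n : ℕ) (bv : Fin n → ℝ) (am : Matrix (Fin n) (Fin n) ℝ)
    (k : EuclideanSpace ℝ (Fin n) → ℝ) (x : EuclideanSpace ℝ (Fin n)) : ℝ :=
  (∑ i, pdX n k x i * bv i) + ∑ i, ∑ j, pdXX n k x i j * am j i

/-- The controlled generator `(A^u k)(t,x) = k_t + k_x · b + tr[k_xx a]`
(the control enters through the frozen data `bv`, `am`). -/
def genA (n : ℕ) (bv : Fin n → ℝ) (am : Matrix (Fin n) (Fin n) ℝ)
    (k : ℝ → EuclideanSpace ℝ (Fin n) → ℝ)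
    (t : ℝ) (x : EuclideanSpace ℝ (Fin n)) : ℝ :=
  pdT n k t x + spatialGen n bv am (k t) x

end

section Helpers

variable {n : ℕ}

lemma pdX_sub_const (f : EuclideanSpace ℝ (Fin n) → ℝ) (c : ℝ) (x : EuclideanSpace ℝ (Fin n))
    (i : Fin n) : pdX n (fun z => f z - c) x i = pdX n f x i := by
  unfold pdX; rw [fderiv_sub_const]

lemma pdXX_sub_const (f : EuclideanSpace ℝ (Fin n) → ℝ) (c : ℝ) (x : EuclideanSpace ℝ (Fin n))
    (i j : Fin n) : pdXX n (fun z => f z - c) x i j = pdXX n f x i j := by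
  unfold pdXX
  have e : (fun y => pdX n (fun z => f z - c) y i) = fun y => pdX n f y i :=
    funext fun y => pdX_sub_const f c y i
  rw [e]

lemma spatialGen_sub_const (bv : Fin n → ℝ) (am : Matrix (Fin n) (Fin n) ℝ)
    (f : EuclideanSpace ℝ (Fin n) → ℝ) (c : ℝ) (x : EuclideanSpace ℝ (Fin n)) :
    spatialGen n bv am (fun z => f z - c) x = spatialGen n bv am f x := by
  unfold spatialGen
  simp only [pdX_sub_const, pdXX_sub_const]

lemma genA_sub_const (bv : Fin n → ℝ) (am : Matrix (Fin n) (Fin n) ℝ)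
    (k : ℝ → EuclideanSpace ℝ (Fin n) → ℝ) (c : ℝ) (t : ℝ) (x : EuclideanSpace ℝ (Fin n)) :
    genA n bv am (fun τ z => k τ z - c) t x = genA n bv am k t x := by
  unfold genA
  have h1 : pdT n (fun τ z => k τ z - c) t x = pdT n k t x := by
    unfold pdT; exact deriv_sub_const c
  rw [h1]
  have h2 : spatialGen n bv am (fun z => k t z - c) x = spatialGen n bv am (k t) x :=
    spatialGen_sub_const bv am (k t) c x
  exact congrArg _ h2

lemma pdX_diff (f : EuclideanSpace ℝ (Fin n) → ℝ) (hf : ContDiff ℝ 2 f) (i : Fin n) :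
    Differentiable ℝ (fun y => pdX n f y i) := by
  have h1 : ContDiff ℝ 1 (fun y => fderiv ℝ f y) := hf.fderiv_right (by norm_num)
  exact (h1.differentiable one_ne_zero).clm_apply (differentiable_const _)

lemma pdX_add (f g : EuclideanSpace ℝ (Fin n) → ℝ) (hf : Differentiable ℝ f)
    (hg : Differentiable ℝ g) (x : EuclideanSpace ℝ (Fin n)) (i : Fin n) :
    pdX n (fun z => f z + g z) x i = pdX n f x i + pdX n g x i := by
  unfold pdX; rw [fderiv_fun_add (hf x) (hg x)]; rfl

lemma pdXX_add (f g : EuclideanSpace ℝ (Fin n) → ℝ) (hf : ContDiff ℝ 2 f)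
    (hg : ContDiff ℝ 2 g) (x : EuclideanSpace ℝ (Fin n)) (i j : Fin n) :
    pdXX n (fun z => f z + g z) x i j = pdXX n f x i j + pdXX n g x i j := by
  unfold pdXX
  have e : (fun y => pdX n (fun z => f z + g z) y i) = fun y => pdX n f y i + pdX n g y i :=
    funext fun y => pdX_add f g (hf.differentiable two_ne_zero) (hg.differentiable two_ne_zero) y i
  rw [e, fderiv_fun_add (pdX_diff f hf i x) (pdX_diff g hg i x)]; rfl

lemma spatialGen_add (bv : Fin n → ℝ) (am : Matrix (Fin n) (Fin n) ℝ)
    (f g : EuclideanSpace ℝ (Fin n) → ℝ) (hf : ContDiff ℝ 2 f) (hg : ContDiff ℝ 2 g)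
    (x : EuclideanSpace ℝ (Fin n)) :
    spatialGen n bv am (fun z => f z + g z) x = spatialGen n bv am f x + spatialGen n bv am g x := by
  unfold spatialGen
  have h1 : ∀ i, pdX n (fun z => f z + g z) x i = pdX n f x i + pdX n g x i :=
    fun i => pdX_add f g (hf.differentiable two_ne_zero) (hg.differentiable two_ne_zero) x i
  have h2 : ∀ i j, pdXX n (fun z => f z + g z) x i j = pdXX n f x i j + pdXX n g x i j :=
    fun i j => pdXX_add f g hf hg x i j
  simp only [h1, h2, add_mul, Finset.sum_add_distrib]
  ring

end Helpers

/-- Proposition of Section 3.3: a classical solution `(Θ, Θ⁰)` of the equilibrium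
HJB equation (HJB-BSVIE-B), together with the local optimality condition for `Ψ̄`
and the separation property `Θ⁰(t,xt,x,y) - Ĝ(xt,y)` independent of `y`, yields a
solution `(V̂, f̂, ĝ, û)` of the extended HJB system (EHJB-B) of
Björk–Khapko–Murgoci, via `V̂(t,x) = Θ⁰(t,x,x,Θ(t,x))`, `û = Ψ̄`,
`f̂(t,xt,x) = Θ⁰(t,xt,x,y) - Ĝ(xt,y)`, `ĝ = Θ`. -/
theorem statement19 (n l : ℕ) (hn : 1 ≤ n) (hl : 1 ≤ l) (T : ℝ) (hT : 0 < T)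
    (U : Set (Fin l → ℝ)) (hU : U.Nonempty)
    (b σv : ℝ → EuclideanSpace ℝ (Fin n) → (Fin l → ℝ) → (Fin n → ℝ))
    (aM : ℝ → EuclideanSpace ℝ (Fin n) → (Fin l → ℝ) → Matrix (Fin n) (Fin n) ℝ)
    (haM : ∀ t x u, aM t x u = (1 / 2 : ℝ) • Matrix.vecMulVec (σv t x u) (σv t x u))
    (Fhat Ghat : EuclideanSpace ℝ (Fin n) → EuclideanSpace ℝ (Fin n) → ℝ)
    (hG : ContDiff ℝ 2 (fun p : EuclideanSpace ℝ (Fin n) × EuclideanSpace ℝ (Fin n) =>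
      Ghat p.1 p.2))
    (Θ : ℝ → EuclideanSpace ℝ (Fin n) → EuclideanSpace ℝ (Fin n))
    (Θ0 : ℝ → EuclideanSpace ℝ (Fin n) → EuclideanSpace ℝ (Fin n) →
      EuclideanSpace ℝ (Fin n) → ℝ)
    (hΘsmooth : ContDiff ℝ (⊤ : ℕ∞) (fun p : ℝ × EuclideanSpace ℝ (Fin n) => Θ p.1 p.2))
    (hΘ0smooth : ContDiff ℝ (⊤ : ℕ∞)
      (fun p : ℝ × EuclideanSpace ℝ (Fin n) × EuclideanSpace ℝ (Fin n) ×
        EuclideanSpace ℝ (Fin n) => Θ0 p.1 p.2.1 p.2.2.1 p.2.2.2))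
    (Ψ : ℝ → EuclideanSpace ℝ (Fin n) → (Fin l → ℝ))
    (hΨU : ∀ t x, Ψ t x ∈ U)
    -- (i) separation: `Θ⁰(t,xt,x,y) - Ĝ(xt,y)` does not depend on `y`
    (hsep : ∀ t xt x y y', Θ0 t xt x y - Ghat xt y = Θ0 t xt x y' - Ghat xt y')
    -- (ii) the two PDEs of the equilibrium HJB equation, with terminal conditions
    (hΘpde : ∀ s ∈ Set.Icc (0 : ℝ) T, ∀ x, ∀ i : Fin n,
      genA n (b s x (Ψ s x)) (aM s x (Ψ s x)) (fun τ z => Θ τ z i) s x = 0)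
    (hΘterm : ∀ x, Θ T x = x)
    (hΘ0pde : ∀ s ∈ Set.Icc (0 : ℝ) T, ∀ xt x y,
      genA n (b s x (Ψ s x)) (aM s x (Ψ s x)) (fun τ z => Θ0 τ xt z y) s x = 0)
    (hΘ0term : ∀ xt x y, Θ0 T xt x y = Fhat xt x + Ghat xt y)
    -- (iii) local optimality of `Ψ̄`
    (Lam : ℝ → EuclideanSpace ℝ (Fin n) → (Fin l → ℝ) → ℝ)
    (hLam : ∀ t x u, Lam t x u =
      spatialGen n (b t x u) (aM t x u) (fun z => Θ0 t x z (Θ t x)) x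
        + fderiv ℝ (fun y => Θ0 t x x y) (Θ t x)
            (toE n fun i => spatialGen n (b t x u) (aM t x u) (fun z => Θ t z i) x))
    (hopt : ∀ t ∈ Set.Icc (0 : ℝ) T, ∀ x, ∀ u ∈ U, Lam t x (Ψ t x) ≤ Lam t x u)
    -- the data of the extended HJB system
    (Vhat : ℝ → EuclideanSpace ℝ (Fin n) → ℝ)
    (hV : ∀ t x, Vhat t x = Θ0 t x x (Θ t x))
    (fhat : ℝ → EuclideanSpace ℝ (Fin n) → EuclideanSpace ℝ (Fin n) → ℝ)
    (hf : ∀ t xt x y, fhat t xt x = Θ0 t xt x y - Ghat xt y)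
    (Ext : (Fin l → ℝ) → ℝ → EuclideanSpace ℝ (Fin n) → ℝ)
    (hExt : ∀ u t x, Ext u t x =
      genA n (b t x u) (aM t x u) Vhat t x
        - genA n (b t x u) (aM t x u) (fun τ z => fhat τ z z) t x
        + genA n (b t x u) (aM t x u) (fun τ z => fhat τ x z) t x
        - genA n (b t x u) (aM t x u) (fun τ z => Ghat z (Θ τ z)) t x
        + fderiv ℝ (fun y => Ghat x y) (Θ t x)
            (toE n fun i => genA n (b t x u) (aM t x u) (fun τ z => Θ τ z i) t x)) :
    -- conclusion: `(V̂, f̂, ĝ, û) = (V̂, f̂, Θ, Ψ̄)` solves the extended HJB system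
    (∀ t ∈ Set.Icc (0 : ℝ) T, ∀ x,
      (Ext (Ψ t x) t x = 0 ∧ ∀ u ∈ U, 0 ≤ Ext u t x) ∧
      (∀ z, genA n (b t x (Ψ t x)) (aM t x (Ψ t x)) (fun τ w => fhat τ z w) t x = 0) ∧
      (∀ i : Fin n,
        genA n (b t x (Ψ t x)) (aM t x (Ψ t x)) (fun τ w => Θ τ w i) t x = 0)) ∧
    (∀ x, Vhat T x = Fhat x x + Ghat x x) ∧
    (∀ xt x, fhat T xt x = Fhat xt x) ∧
    (∀ x, Θ T x = x) := by
  have hfE : fhat = fun t xt x => Θ0 t xt x 0 - Ghat xt 0 := by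
    funext t xt x; exact hf t xt x 0
  subst hfE
  have hVE : Vhat = fun t x => Θ0 t x x (Θ t x) := by
    funext t x; exact hV t x
  subst hVE
  refine ⟨?_, ?_, ?_, hΘterm⟩
  · intro t ht x
    refine ⟨?_, ?_, fun i => hΘpde t ht x i⟩
    · -- Ext part
      -- regularity facts
      have hΘ2 : ContDiff ℝ 2 (fun p : ℝ × EuclideanSpace ℝ (Fin n) => Θ p.1 p.2) :=
        hΘsmooth.of_le (WithTop.coe_le_coe.mpr le_top)
      have hΘ02 : ContDiff ℝ 2
          (fun p : ℝ × EuclideanSpace ℝ (Fin n) × EuclideanSpace ℝ (Fin n) ×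
            EuclideanSpace ℝ (Fin n) => Θ0 p.1 p.2.1 p.2.2.1 p.2.2.2) :=
        hΘ0smooth.of_le (WithTop.coe_le_coe.mpr le_top)
      have hD2 : ContDiff ℝ 2 (fun z : EuclideanSpace ℝ (Fin n) => Θ0 t z z 0 - Ghat z 0) := by
        have h1 : ContDiff ℝ 2 (fun z : EuclideanSpace ℝ (Fin n) => Θ0 t z z 0) :=
          hΘ02.comp (contDiff_const.prodMk (contDiff_id.prodMk (contDiff_id.prodMk contDiff_const)))
        have h2 : ContDiff ℝ 2 (fun z : EuclideanSpace ℝ (Fin n) => Ghat z 0) :=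
          hG.comp (contDiff_id.prodMk contDiff_const)
        exact h1.sub h2
      have hΘt2 : ContDiff ℝ 2 (fun z => Θ t z) :=
        hΘ2.comp (contDiff_const.prodMk contDiff_id)
      have hGΘ2 : ContDiff ℝ 2 (fun z => Ghat z (Θ t z)) :=
        hG.comp (contDiff_id.prodMk hΘt2)
      have hDt : DifferentiableAt ℝ (fun τ => Θ0 τ x x 0 - Ghat x 0) t := by
        have h1 : ContDiff ℝ 2 (fun τ : ℝ => Θ0 τ x x 0) :=
          hΘ02.comp (contDiff_id.prodMk
            (contDiff_const (c := (x, x, (0 : EuclideanSpace ℝ (Fin n))))))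
        exact ((h1.differentiable two_ne_zero) t).sub (differentiableAt_const _)
      have hGΘt : DifferentiableAt ℝ (fun τ => Ghat x (Θ τ x)) t := by
        have hGx2 : ContDiff ℝ 2 (fun y => Ghat x y) := hG.comp (contDiff_const.prodMk contDiff_id)
        have hΘx : ContDiff ℝ 2 (fun τ : ℝ => Θ τ x) :=
          hΘ2.comp (contDiff_id.prodMk (contDiff_const (c := x)))
        exact ((hGx2.comp hΘx).differentiable two_ne_zero) t
      -- key identities
      have key : ∀ u, Ext u t x = Lam t x u - Lam t x (Ψ t x) := by
        intro u
        have key1 : genA n (b t x u) (aM t x u) (fun t x => Θ0 t x x (Θ t x)) t x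
            = genA n (b t x u) (aM t x u) (fun τ z => Θ0 τ z z 0 - Ghat z 0) t x
              + genA n (b t x u) (aM t x u) (fun τ z => Ghat z (Θ τ z)) t x := by
          unfold genA
          have e1 : pdT n (fun t x => Θ0 t x x (Θ t x)) t x
              = pdT n (fun τ z => Θ0 τ z z 0 - Ghat z 0) t x
                + pdT n (fun τ z => Ghat z (Θ τ z)) t x := by
            unfold pdT
            have e : (fun τ => Θ0 τ x x (Θ τ x))
                = fun τ => (Θ0 τ x x 0 - Ghat x 0) + Ghat x (Θ τ x) := by
              funext τ; have := hsep τ x x 0 (Θ τ x); linarith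
            rw [e]
            exact deriv_fun_add hDt hGΘt
          have e2 : spatialGen n (b t x u) (aM t x u) (fun z => Θ0 t z z (Θ t z)) x
              = spatialGen n (b t x u) (aM t x u) (fun z => Θ0 t z z 0 - Ghat z 0) x
                + spatialGen n (b t x u) (aM t x u) (fun z => Ghat z (Θ t z)) x := by
            have e : (fun z => Θ0 t z z (Θ t z))
                = fun z => (Θ0 t z z 0 - Ghat z 0) + Ghat z (Θ t z) := by
              funext z; have := hsep t z z 0 (Θ t z); linarith
            rw [e]
            exact spatialGen_add _ _ _ _ hD2 hGΘ2 x
          rw [e1, e2]; ring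
        have key3 : genA n (b t x u) (aM t x u) (fun τ z => Θ0 τ x z 0 - Ghat x 0) t x
            = pdT n (fun τ z => Θ0 τ x z (Θ t x)) t x
              + spatialGen n (b t x u) (aM t x u) (fun z => Θ0 t x z (Θ t x)) x := by
          have e3 : (fun τ z => Θ0 τ x z 0 - Ghat x 0)
              = fun τ z => Θ0 τ x z (Θ t x) - Ghat x (Θ t x) := by
            funext τ z; exact hsep τ x z 0 (Θ t x)
          rw [e3, genA_sub_const]
          rfl
        have key4 : fderiv ℝ (fun y => Θ0 t x x y) (Θ t x)
            = fderiv ℝ (fun y => Ghat x y) (Θ t x) := by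
          have e : (fun y => Θ0 t x x y) = fun y => Ghat x y + (Θ0 t x x 0 - Ghat x 0) := by
            funext y; have := hsep t x x y 0; linarith
          rw [e, fderiv_add_const]
        have key5 : (fderiv ℝ (fun y => Ghat x y) (Θ t x))
              (toE n fun i => genA n (b t x u) (aM t x u) (fun τ z => Θ τ z i) t x)
            = (fderiv ℝ (fun y => Ghat x y) (Θ t x))
                (toE n fun i => pdT n (fun τ z => Θ τ z i) t x)
              + (fderiv ℝ (fun y => Ghat x y) (Θ t x))
                (toE n fun i => spatialGen n (b t x u) (aM t x u) (fun z => Θ t z i) x) := by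
          rw [← map_add]
          rfl
        have key6 : (fderiv ℝ (fun y => Ghat x y) (Θ t x))
              (toE n fun i => pdT n (fun τ z => Θ τ z i) t x)
            = - (fderiv ℝ (fun y => Ghat x y) (Θ t x))
                (toE n fun i =>
                  spatialGen n (b t x (Ψ t x)) (aM t x (Ψ t x)) (fun z => Θ t z i) x) := by
          have hcomp : (fun i => pdT n (fun τ z => Θ τ z i) t x)
              = fun i => -(spatialGen n (b t x (Ψ t x)) (aM t x (Ψ t x)) (fun z => Θ t z i) x) := by
            funext i
            have h := hΘpde t ht x i
            unfold genA at h
            linarith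
          have e : toE n (fun i => pdT n (fun τ z => Θ τ z i) t x)
              = - toE n (fun i =>
                  spatialGen n (b t x (Ψ t x)) (aM t x (Ψ t x)) (fun z => Θ t z i) x) := by
            rw [hcomp]; rfl
          rw [e, map_neg]
        have P0 : pdT n (fun τ z => Θ0 τ x z (Θ t x)) t x
            + spatialGen n (b t x (Ψ t x)) (aM t x (Ψ t x)) (fun z => Θ0 t x z (Θ t x)) x = 0 := by
          have h := hΘ0pde t ht x x (Θ t x)
          unfold genA at h
          exact h
        rw [hExt u t x, hLam t x u, hLam t x (Ψ t x), key4, key1, key3, key5, key6]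
        linarith [P0]
      constructor
      · rw [key (Ψ t x)]; exact sub_self _
      · intro u hu
        rw [key u]
        exact sub_nonneg.mpr (hopt t ht x u hu)
    · intro z
      show genA n (b t x (Ψ t x)) (aM t x (Ψ t x)) (fun τ w => Θ0 τ z w 0 - Ghat z 0) t x = 0
      rw [genA_sub_const]
      exact hΘ0pde t ht z x 0
  · intro x
    show Θ0 T x x (Θ T x) = Fhat x x + Ghat x x
    rw [hΘterm, hΘ0term]
  · intro xt x
    show Θ0 T xt x 0 - Ghat xt 0 = Fhat xt x
    rw [hΘ0term]; ring
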